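/- Let G be a finite abelian group, Ω a finite set, and T, S : G → ℂ^{Ω×Ω} families of matrices with: each T_g a permutation matrix and T_g·T_h = T_{gh}; each S_g a 0-1 matrix; Σ_{g∈G} T_g + Σ_{g∈G} S_g = J (the all-ones matrix); and T_h·S_g = S_{hg}, S_g·T_h = S_{gh} for all g, h ∈ G. Fix z ∈ Ω and set Ω̃₁ := {z} ∪ {y ∈ Ω : (S_1)_{z,y} = 1}. Then the map Ω̃₁ × G → Ω, (x, g) ↦ x^g, is a bijection. -/

import Mathlib

/-
Read row `z` of `∑ T_g + ∑ S_g = J`: every `w ∈ Ω` gets exactly one `1` from the entries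
`(T_g)_{z,w}` and `(S_g)_{z,w}`. Since `S_g = S_1 T_g`, the entry `(S_g)_{z,w}` is `(S_1)_{z,y}` for
the point `y` with `y^g = w`. So every `w` is, in exactly one way, either `z^g` or `y^g` with
`y ∈ S_1(z)`, which is the bijectivity of `(x, g) ↦ x^g` on `Ω̃₁ × G`.
-/

lemma existsUnique_eq_one_of_sum_eq_one {ι R : Type*} [Fintype ι] [AddCommMonoidWithOne R]
    [CharZero R] {f : ι → R} (h01 : ∀ i, f i = 0 ∨ f i = 1) (hsum : ∑ i, f i = 1) :
    ∃! i, f i = 1 := by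
  classical
  have hboole : ∑ i, f i = ∑ i, if f i = 1 then (1 : R) else 0 :=
    Finset.sum_congr rfl fun i _ => by rcases h01 i with h | h <;> simp [h]
  rw [hboole, Finset.sum_boole] at hsum
  exact (Fintype.existsUnique_iff_card_one _).2 (by exact_mod_cast hsum)

lemma bijective_insert_prod_of_existsUnique {G Ω : Type*} (σ : G → Equiv.Perm Ω) (z : Ω)
    (A : Set Ω)
    (h : ∀ w, ∃! i : G ⊕ G, Sum.elim (fun g => σ g z = w) (fun g => (σ g).symm w ∈ A) i) :
    Function.Bijective (fun p : ↥(insert z A) × G => σ p.2 p.1) := by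
  classical
  -- the summand of `G ⊕ G` that accounts for `p.1 ^ p.2`
  let tag (p : ↥(insert z A) × G) : G ⊕ G :=
    if (p.1 : Ω) = z then .inl p.2 else .inr p.2
  have tag_spec : ∀ p : ↥(insert z A) × G,
      Sum.elim (fun g => σ g z = σ p.2 p.1) (fun g => (σ g).symm (σ p.2 p.1) ∈ A) (tag p) := by
    rintro ⟨⟨x, hx⟩, g⟩
    by_cases hxz : x = z
    · simp [tag, hxz]
    · simpa [tag, hxz] using hx
  constructor
  · intro p q (hpq : σ p.2 p.1 = σ q.2 q.1)
    have htag : tag p = tag q := (h _).unique (tag_spec p) (by rw [hpq]; exact tag_spec q)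
    obtain ⟨⟨x, _⟩, g⟩ := p
    obtain ⟨⟨y, _⟩, k⟩ := q
    by_cases hxz : x = z <;> by_cases hyz : y = z <;> simp [tag, hxz, hyz] at htag hpq <;>
      subst htag
    · simp [hxz, hyz]
    · simpa using hpq
  · intro w
    obtain ⟨i | g, hi, -⟩ := h w
    · exact ⟨⟨⟨z, Set.mem_insert z A⟩, i⟩, hi⟩
    · exact ⟨⟨⟨(σ g).symm w, Set.mem_insert_of_mem z hi⟩, g⟩, (σ g).apply_symm_apply w⟩

theorem stmt10_general {G : Type*} [CommGroup G] [Fintype G]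
    {Ω : Type*} [Fintype Ω] [DecidableEq Ω]
    (T S : G → Matrix Ω Ω ℂ)
    (σ : G → Equiv.Perm Ω)
    (hσ : ∀ (g : G) (x y : Ω), T g x y = if σ g x = y then 1 else 0)
    (hS01 : ∀ (g : G) (x y : Ω), S g x y = 0 ∨ S g x y = 1)
    (hJ : ∀ x y : Ω, (∑ g : G, T g x y) + ∑ g : G, S g x y = 1)
    (hST : ∀ g h : G, S g * T h = S (g * h))
    (z : Ω) :
    Function.Bijective
      (fun p : (insert z {y : Ω | S 1 z y = 1} : Set Ω) × G => σ p.2 p.1) := by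
  have hT : ∀ g, T g = (σ g).permMatrix ℂ := fun g => Matrix.ext fun x y => by
    simp [hσ, PEquiv.toMatrix_apply, Equiv.toPEquiv_apply]
  have hS : ∀ g x w, S g x w = S 1 x ((σ g).symm w) := fun g x w => by
    rw [← one_mul g, ← hST, hT, PEquiv.mul_toMatrix_toPEquiv, one_mul]
    rfl
  refine bijective_insert_prod_of_existsUnique σ z _ fun w => ?_
  have h01 : ∀ i, Sum.elim (fun g => T g z w) (fun g => S g z w) i = 0 ∨
      Sum.elim (fun g => T g z w) (fun g => S g z w) i = 1 := by
    rintro (g | g)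
    · by_cases h : σ g z = w <;> simp [hσ, h]
    · exact hS01 g z w
  have hsum : ∑ i, Sum.elim (fun g => T g z w) (fun g => S g z w) i = 1 := by
    rw [Fintype.sum_sum_type]
    exact hJ z w
  refine (existsUnique_congr ?_).1 (existsUnique_eq_one_of_sum_eq_one h01 hsum)
  rintro (g | g)
  · simp [hσ]
  · rw [Sum.elim_inr, Sum.elim_inr, hS]
    rfl

/-- **The map `Ω̃₁ × G → Ω`, `(x,g) ↦ x^g`, is a bijection** for a scheme whose
thin radical acts regularly on the thick relations, where
`Ω̃₁ = {z} ∪ S_1(z)`. -/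
theorem stmt10 {G : Type*} [CommGroup G] [Fintype G] [DecidableEq G]
    {Ω : Type*} [Fintype Ω] [DecidableEq Ω]
    (T S : G → Matrix Ω Ω ℂ)
    (σ : G → Equiv.Perm Ω)
    (hσ : ∀ (g : G) (x y : Ω), T g x y = if σ g x = y then 1 else 0)
    (hT : ∀ g h : G, T g * T h = T (g * h))
    (hS01 : ∀ (g : G) (x y : Ω), S g x y = 0 ∨ S g x y = 1)
    (hJ : ∀ x y : Ω, (∑ g : G, T g x y) + ∑ g : G, S g x y = 1)
    (hTS : ∀ g h : G, T h * S g = S (h * g))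
    (hST : ∀ g h : G, S g * T h = S (g * h))
    (z : Ω) :
    Function.Bijective
      (fun p : (insert z {y : Ω | S 1 z y = 1} : Set Ω) × G => σ p.2 p.1) :=
  stmt10_general T S σ hσ hS01 hJ hST z
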